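/- Let N, n be positive integers and let A and B be disjoint sets of n points each in the integer grid {0,…,N}² ⊆ ℝ², with no three points of A ∪ B collinear. Let ℓ be a nonnegative integer with 2^ℓ ≥ 8nN⁴, and define d_ℓ(a, b) = ⌊2^ℓ · ‖a − b‖⌋. If M₁ and M₂ are bijections A → B that both minimize Σ_{a∈A} d_ℓ(a, M(a)) over all bijections M : A → B, then no edge of M₁ crosses an edge of M₂: for all a₁, a₂ ∈ A with a₁ ≠ a₂ and M₁(a₁) ≠ M₂(a₂), the open segments from a₁ to M₁(a₁) and from a₂ to M₂(a₂) are disjoint. Hence the union of all d_ℓ-minimum weight perfect matchings forms a planar graph. -/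

import Mathlib

/-!
Suppose the edge `a₁b₁` of `M₁` crosses the edge `a₂b₂` of `M₂`.

Exchange: the 2-regular bipartite multigraph `M₁ + M₂ - a₁b₁ - a₂b₂ + a₁b₂ + a₂b₁` is the union
of two perfect matchings, so minimality of `M₁` and `M₂` gives
`d(a₁,b₁) + d(a₂,b₂) ≤ d(a₁,b₂) + d(a₂,b₁)`.

Gain: write `u = b₁ - a₁`, `v = b₂ - a₂` and `a₁ + t u = a₂ + s v` for the crossing point. By
Lagrange's identity the triangle inequality through the crossing point and `a₁`, `b₂` has defect
at least `t (1 - s) (u × v)² / (2 |u| |v| (t |u| + (1 - s) |v|))`. On the grid `u × v`, `t (u × v)`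
and `s (u × v)` are integers, nonzero by non-collinearity, which bounds
`|a₁b₁| + |a₂b₂| - |a₁b₂| - |a₂b₁|` below by `1 / (8 N³)`. As `2^ℓ ≥ 16 N³`, this gain survives
the rounding in `d_ℓ` and contradicts the exchange inequality.
-/

open scoped BigOperators

attribute [local instance] Classical.propDecidable

def OnGrid (N : ℕ) (p : EuclideanSpace ℝ (Fin 2)) : Prop :=
  ∀ i : Fin 2, ∃ m : ℕ, m ≤ N ∧ p i = (m : ℝ)

noncomputable def dl (l : ℕ) (a b : EuclideanSpace ℝ (Fin 2)) : ℤ :=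
  ⌊(2 : ℝ) ^ l * ‖a - b‖⌋

noncomputable def dlWeight (l : ℕ) (A B : Finset (EuclideanSpace ℝ (Fin 2)))
    (M : {x // x ∈ A} → {y // y ∈ B}) : ℤ :=
  ∑ a : {x // x ∈ A},
    dl l (a : EuclideanSpace ℝ (Fin 2)) (M a : EuclideanSpace ℝ (Fin 2))

namespace Equiv.Perm

variable {α : Type*}

theorem SameCycle.not_sameCycle_mul_swap [Finite α] [DecidableEq α] {f : Perm α} {x y : α}
    (h : f.SameCycle x y) (hxy : x ≠ y) : ¬(f * swap x y).SameCycle y x := by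
  have hk : ∃ k, 0 < k ∧ (f ^ k) x = y := by
    obtain ⟨k, hk, -, hfk⟩ := h.exists_pow_eq''
    exact ⟨k, hk, hfk⟩
  set k := Nat.find hk
  obtain ⟨hk0, hfk⟩ : 0 < k ∧ (f ^ k) x = y := Nat.find_spec hk
  have hmin : ∀ j, 0 < j → j < k → (f ^ j) x ≠ y := fun j hj hjk hfj =>
    Nat.find_min hk hjk ⟨hj, hfj⟩
  -- the arc `f x, f² x, …, f^k x = y` of the `f`-cycle is invariant under `f * swap x y`
  set S : Set α := {z | ∃ j, 0 < j ∧ j ≤ k ∧ (f ^ j) x = z}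
  have hxS : x ∉ S := by
    rintro ⟨j, hj, hjk, hfj⟩
    rcases hjk.lt_or_eq with hjk | rfl
    · refine hmin (k - j) (by omega) (by omega) ?_
      rw [← hfk, ← hfj, ← mul_apply, ← pow_add, Nat.sub_add_cancel hjk.le, hfj]
    · exact hxy (hfj.symm.trans hfk)
  have hS : ∀ z ∈ S, (f * swap x y) z ∈ S := by
    rintro z ⟨j, hj, hjk, rfl⟩
    rcases hjk.lt_or_eq with hjk | rfl
    · have hne : (f ^ j) x ≠ x := fun h => hxS ⟨j, hj, hjk.le, h⟩
      rw [mul_apply, swap_apply_of_ne_of_ne hne (hmin j hj hjk), ← mul_apply, ← pow_succ']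
      exact ⟨j + 1, by omega, hjk, _root_.rfl⟩
    · rw [mul_apply, hfk, swap_apply_right]
      exact ⟨1, one_pos, hk0, by rw [pow_one]⟩
  have hpow : ∀ n : ℕ, ((f * swap x y) ^ n) y ∈ S := by
    intro n
    induction n with
    | zero => exact ⟨k, hk0, le_rfl, hfk⟩
    | succ n ih => rw [pow_succ', mul_apply]; exact hS _ ih
  intro hyx
  obtain ⟨n, hn⟩ := hyx.exists_nat_pow_eq
  exact hxS (hn ▸ hpow n)

variable [DecidableEq α] [Fintype α] (f : Perm α) {x a : α}

theorem cycleOf_inv_apply_apply_of_sameCycle (h : f.SameCycle x a) :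
    (f.cycleOf x)⁻¹ (f a) = a :=
  inv_eq_iff_eq.2 h.cycleOf_apply.symm

theorem cycleOf_inv_apply_apply_of_not_sameCycle (h : ¬f.SameCycle x a) :
    (f.cycleOf x)⁻¹ (f a) = f a :=
  inv_eq_iff_eq.2 (cycleOf_apply_of_not_sameCycle (mt sameCycle_apply_right.1 h)).symm

theorem sym2_cycleOf_apply_inv_apply (x a : α) :
    s(f.cycleOf x a, (f.cycleOf x)⁻¹ (f a)) = s(a, f a) := by
  by_cases h : f.SameCycle x a
  · rw [h.cycleOf_apply, cycleOf_inv_apply_apply_of_sameCycle f h, Sym2.eq_swap]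
  · rw [cycleOf_apply_of_not_sameCycle h, cycleOf_inv_apply_apply_of_not_sameCycle f h]

/-- `s(ρ₁ a, ρ₂ a)` are the two edges at `a` of the multigraph `id + π` with `a₁ — a₁` replaced by
`a₁ — π a₂` and `a₂ — π a₂` by `a₂ — a₁`. If `a₁` lies on the `π`-cycle of `a₂`, the transposition
splits that cycle and its piece through `a₁` is taken; otherwise the cycle of `a₂` itself. -/
theorem exists_sym2_eq_update (π : Perm α) {a₁ a₂ : α} (hne : a₁ ≠ a₂) :
    ∃ ρ₁ ρ₂ : Perm α, ∀ a,
      s(ρ₁ a, ρ₂ a) = s(Function.update id a₁ (π a₂) a, Function.update π a₂ a₁ a) := by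
  by_cases h : π.SameCycle a₂ a₁
  · set μ := π * swap a₂ a₁
    have hμ : ¬μ.SameCycle a₁ a₂ := h.not_sameCycle_mul_swap hne.symm
    have hμ₁ : μ a₁ = π a₂ := by simp [μ]
    have hμ₂ : μ a₂ = π a₁ := by simp [μ]
    refine ⟨μ.cycleOf a₁, (μ.cycleOf a₁)⁻¹ * π, fun a => ?_⟩
    rcases eq_or_ne a a₁ with rfl | ha₁
    · rw [mul_apply, cycleOf_apply_self, hμ₁, ← hμ₂,
        cycleOf_inv_apply_apply_of_not_sameCycle μ hμ, hμ₂, Function.update_self,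
        Function.update_of_ne hne]
    rcases eq_or_ne a a₂ with rfl | ha₂
    · rw [mul_apply, cycleOf_apply_of_not_sameCycle hμ, ← hμ₁,
        cycleOf_inv_apply_apply_of_sameCycle μ SameCycle.rfl, Function.update_self,
        Function.update_of_ne ha₁, id]
    · have hμa : π a = μ a := by simp [μ, swap_apply_of_ne_of_ne ha₂ ha₁]
      rw [mul_apply, hμa, sym2_cycleOf_apply_inv_apply, Function.update_of_ne ha₁,
        Function.update_of_ne ha₂, hμa, id]
  · refine ⟨π.cycleOf a₂ * swap a₁ a₂, (π.cycleOf a₂)⁻¹ * π, fun a => ?_⟩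
    rcases eq_or_ne a a₁ with rfl | ha₁
    · rw [mul_apply, mul_apply, swap_apply_left, cycleOf_apply_self,
        cycleOf_inv_apply_apply_of_not_sameCycle π h, Function.update_self,
        Function.update_of_ne hne]
    rcases eq_or_ne a a₂ with rfl | ha₂
    · rw [mul_apply, mul_apply, swap_apply_right, cycleOf_apply_of_not_sameCycle h,
        cycleOf_inv_apply_apply_of_sameCycle π SameCycle.rfl, Function.update_self,
        Function.update_of_ne ha₁, id, Sym2.eq_swap]
    · rw [mul_apply, mul_apply, swap_apply_of_ne_of_ne ha₁ ha₂, sym2_cycleOf_apply_inv_apply,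
        Function.update_of_ne ha₁, Function.update_of_ne ha₂, id]

end Equiv.Perm

open Function in
theorem Fintype.sum_apply_update_add {α β M : Type*} [Fintype α] [DecidableEq α] [AddCommMonoid M]
    (w : α → β → M) (g : α → β) (i : α) (c : β) :
    ∑ a, w a (update g i c a) + w i (g i) = ∑ a, w a (g a) + w i c := by
  have key : ∀ d : β, ∑ a, w a (update g i d a) = w i d + ∑ a ∈ Finset.univ \ {i}, w a (g a) :=
    fun d => by
      simp only [apply_update (fun a => w a) g i d]
      exact Finset.sum_update_of_mem (Finset.mem_univ i) _ _
  conv_rhs => rw [← update_eq_self i g, key]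
  rw [key]
  abel

section Matching

open Function

variable {α β M : Type*} [Fintype α] [AddCommMonoid M] [PartialOrder M]

def IsMinWeightMatching (W : α → β → M) (e : α → β) : Prop :=
  Bijective e ∧ ∀ e' : α → β, Bijective e' → ∑ a, W a (e a) ≤ ∑ a, W a (e' a)

variable [DecidableEq α] [IsOrderedCancelAddMonoid M] {W : α → β → M} {e₁ e₂ : α → β}

theorem IsMinWeightMatching.add_le_add_swap (h₁ : IsMinWeightMatching W e₁)
    (h₂ : IsMinWeightMatching W e₂) {a₁ a₂ : α} (hne : a₁ ≠ a₂) :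
    W a₁ (e₁ a₁) + W a₂ (e₂ a₂) ≤ W a₁ (e₂ a₂) + W a₂ (e₁ a₁) := by
  set E₁ := Equiv.ofBijective e₁ h₁.1
  set π : Equiv.Perm α := (Equiv.ofBijective e₂ h₂.1).trans E₁.symm
  have hπ : ∀ a, e₁ (π a) = e₂ a := fun a => E₁.apply_symm_apply (e₂ a)
  obtain ⟨ρ₁, ρ₂, hρ⟩ := π.exists_sym2_eq_update hne
  set w : α → α → M := fun a a' => W a (e₁ a')
  have hsplit : ∑ a, w a (ρ₁ a) + ∑ a, w a (ρ₂ a) =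
      ∑ a, w a (update id a₁ (π a₂) a) + ∑ a, w a (update π a₂ a₁ a) := by
    rw [← Finset.sum_add_distrib, ← Finset.sum_add_distrib]
    refine Finset.sum_congr rfl fun a _ => ?_
    rcases Sym2.eq_iff.1 (hρ a) with ⟨h, h'⟩ | ⟨h, h'⟩ <;> rw [h, h']
    exact add_comm _ _
  have m₁ : ∑ a, W a (e₁ a) ≤ ∑ a, w a (ρ₁ a) := h₁.2 _ (h₁.1.comp ρ₁.bijective)
  have m₂ : ∑ a, W a (e₂ a) ≤ ∑ a, w a (ρ₂ a) := h₂.2 _ (h₁.1.comp ρ₂.bijective)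
  have u₁ := Fintype.sum_apply_update_add w id a₁ (π a₂)
  have u₂ := Fintype.sum_apply_update_add w π a₂ a₁
  refine le_of_add_le_add_left (a := ∑ a, W a (e₁ a) + ∑ a, W a (e₂ a)) ?_
  calc ∑ a, W a (e₁ a) + ∑ a, W a (e₂ a) + (W a₁ (e₁ a₁) + W a₂ (e₂ a₂))
      ≤ ∑ a, w a (ρ₁ a) + ∑ a, w a (ρ₂ a) + (W a₁ (e₁ a₁) + W a₂ (e₂ a₂)) := by
        gcongr
    _ = (∑ a, w a (update id a₁ (π a₂) a) + w a₁ (id a₁))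
          + (∑ a, w a (update π a₂ a₁ a) + w a₂ (π a₂)) := by
        rw [hsplit]; simp only [w, id, hπ]; abel
    _ = ∑ a, W a (e₁ a) + ∑ a, W a (e₂ a) + (W a₁ (e₂ a₂) + W a₂ (e₁ a₁)) := by
        rw [u₁, u₂]; simp only [w, id, hπ]; abel

end Matching

open scoped RealInnerProductSpace

theorem norm_mul_norm_sub_inner_le {F : Type*} [NormedAddCommGroup F] [InnerProductSpace ℝ F]
    (x y : F) : ‖x‖ * ‖y‖ - ⟪x, y⟫ ≤ (‖x‖ + ‖y‖) * (‖x‖ + ‖y‖ - ‖x + y‖) := by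
  have h₁ := norm_add_sq_real x y
  have h₂ := norm_add_le x y
  nlinarith [norm_nonneg (x + y)]

def cross (u v : EuclideanSpace ℝ (Fin 2)) : ℝ := u 0 * v 1 - u 1 * v 0

theorem cross_swap (u v : EuclideanSpace ℝ (Fin 2)) : cross v u = -cross u v := by
  simp only [cross]; ring

theorem inner_sq_add_cross_sq (u v : EuclideanSpace ℝ (Fin 2)) :
    ⟪u, v⟫ ^ 2 + cross u v ^ 2 = ‖u‖ ^ 2 * ‖v‖ ^ 2 := by
  simp only [EuclideanSpace.norm_sq_eq, PiLp.inner_apply, Fin.sum_univ_two, Real.norm_eq_abs,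
    sq_abs, cross, RCLike.inner_apply, conj_trivial]
  ring

theorem cross_sq_le (u v : EuclideanSpace ℝ (Fin 2)) :
    cross u v ^ 2 ≤ 2 * (‖u‖ * ‖v‖) * (‖u‖ + ‖v‖) * (‖u‖ + ‖v‖ - ‖u + v‖) := by
  have h₁ := inner_sq_add_cross_sq u v
  have h₂ := norm_mul_norm_sub_inner_le u v
  have h₃ := (abs_le.1 (abs_real_inner_le_norm u v))
  have h₄ : 0 ≤ ‖u‖ * ‖v‖ := by positivity
  calc cross u v ^ 2 = (‖u‖ * ‖v‖ + ⟪u, v⟫) * (‖u‖ * ‖v‖ - ⟪u, v⟫) := by linear_combination h₁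
    _ ≤ 2 * (‖u‖ * ‖v‖) * (‖u‖ * ‖v‖ - ⟪u, v⟫) := by gcongr <;> linarith
    _ ≤ 2 * (‖u‖ * ‖v‖) * ((‖u‖ + ‖v‖) * (‖u‖ + ‖v‖ - ‖u + v‖)) := by gcongr
    _ = _ := by ring

theorem exists_eq_smul_of_cross_eq_zero {u w : EuclideanSpace ℝ (Fin 2)} (hu : u ≠ 0)
    (h : cross u w = 0) : ∃ r : ℝ, w = r • u := by
  simp only [cross] at h
  have hu' : u 0 ≠ 0 ∨ u 1 ≠ 0 := by
    by_contra! h0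
    exact hu (by ext i; fin_cases i <;> simp [h0])
  rcases hu' with hu0 | hu1
  · refine ⟨w 0 / u 0, ?_⟩
    ext i; fin_cases i
    · simp [hu0]
    · simp; field_simp; linear_combination h
  · refine ⟨w 1 / u 1, ?_⟩
    ext i; fin_cases i
    · simp; field_simp; linear_combination -h
    · simp [hu1]

theorem collinear_of_cross_eq_zero {a b c : EuclideanSpace ℝ (Fin 2)}
    (h : cross (b - a) (c - a) = 0) : Collinear ℝ {a, b, c} := by
  rcases eq_or_ne b a with rfl | hab
  · simpa using collinear_pair ℝ b c
  obtain ⟨r, hr⟩ := exists_eq_smul_of_cross_eq_zero (sub_ne_zero.2 hab) h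
  have hc : c ∈ line[ℝ, a, b] := by
    convert AffineMap.lineMap_mem_affineSpan_pair r a b using 1
    rw [AffineMap.lineMap_apply, vsub_eq_sub, vadd_eq_add, ← hr, sub_add_cancel]
  rw [Set.pair_comm, Set.insert_comm]
  exact collinear_insert_of_mem_affineSpan_pair hc

namespace OnGrid

variable {N : ℕ} {p q p' q' : EuclideanSpace ℝ (Fin 2)}

theorem exists_intCast_eq_sub_apply (hp : OnGrid N p) (hq : OnGrid N q) (i : Fin 2) :
    ∃ z : ℤ, (p - q) i = z := by
  obtain ⟨m, -, hm⟩ := hp i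
  obtain ⟨k, -, hk⟩ := hq i
  exact ⟨m - k, by simp [hm, hk]⟩

theorem abs_sub_apply_le (hp : OnGrid N p) (hq : OnGrid N q) (i : Fin 2) :
    |(p - q) i| ≤ N := by
  obtain ⟨m, hmN, hm⟩ := hp i
  obtain ⟨k, hkN, hk⟩ := hq i
  have : (m : ℝ) ≤ N := by exact_mod_cast hmN
  have : (k : ℝ) ≤ N := by exact_mod_cast hkN
  rw [PiLp.sub_apply, hm, hk, abs_le]
  constructor <;> linarith [(m.cast_nonneg : (0 : ℝ) ≤ m), (k.cast_nonneg : (0 : ℝ) ≤ k)]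

theorem norm_sub_sq_le (hp : OnGrid N p) (hq : OnGrid N q) : ‖p - q‖ ^ 2 ≤ 2 * N ^ 2 := by
  rw [EuclideanSpace.norm_sq_eq, Fin.sum_univ_two, two_mul]
  gcongr <;> exact abs_sub_apply_le hp hq _

theorem exists_cross_eq_intCast (hp : OnGrid N p) (hq : OnGrid N q) (hp' : OnGrid N p')
    (hq' : OnGrid N q') : ∃ z : ℤ, cross (p - q) (p' - q') = z := by
  obtain ⟨x₀, hx₀⟩ := exists_intCast_eq_sub_apply hp hq 0
  obtain ⟨x₁, hx₁⟩ := exists_intCast_eq_sub_apply hp hq 1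
  obtain ⟨y₀, hy₀⟩ := exists_intCast_eq_sub_apply hp' hq' 0
  obtain ⟨y₁, hy₁⟩ := exists_intCast_eq_sub_apply hp' hq' 1
  exact ⟨x₀ * y₁ - x₁ * y₀, by rw [cross, hx₀, hx₁, hy₀, hy₁]; push_cast; ring⟩

end OnGrid

theorem mul_cross_sq_le {p q : ℝ} (hp : 0 < p) (hq : 0 < q) (u v : EuclideanSpace ℝ (Fin 2)) :
    p * q * cross u v ^ 2 ≤
      2 * (‖u‖ * ‖v‖) * (p * ‖u‖ + q * ‖v‖) * (p * ‖u‖ + q * ‖v‖ - ‖p • u + q • v‖) := by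
  have h := cross_sq_le (p • u) (q • v)
  rw [norm_smul_of_nonneg hp.le, norm_smul_of_nonneg hq.le,
    show cross (p • u) (q • v) = p * q * cross u v by
      simp only [cross, PiLp.smul_apply, smul_eq_mul]; ring] at h
  refine le_of_mul_le_mul_left ?_ (mul_pos hp hq)
  linear_combination h

theorem mul_cross_sq_le_of_segments_cross {a₁ b₁ a₂ b₂ : EuclideanSpace ℝ (Fin 2)} {t s : ℝ}
    (ht₀ : 0 < t) (ht₁ : t < 1) (hs₀ : 0 < s) (hs₁ : s < 1)
    (hX : a₁ + t • (b₁ - a₁) = a₂ + s • (b₂ - a₂)) :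
    t * (1 - s) * cross (b₁ - a₁) (b₂ - a₂) ^ 2 ≤
      2 * (‖b₁ - a₁‖ * ‖b₂ - a₂‖) * (t * ‖b₁ - a₁‖ + (1 - s) * ‖b₂ - a₂‖) *
        (‖a₁ - b₁‖ + ‖a₂ - b₂‖ - (‖a₁ - b₂‖ + ‖a₂ - b₁‖)) := by
  have hx : t • (b₁ - a₁) + (1 - s) • (b₂ - a₂) = b₂ - a₁ := by
    rw [sub_smul, one_smul]
    calc _ = (a₁ + t • (b₁ - a₁)) - s • (b₂ - a₂) + (b₂ - a₂) - a₁ := by abel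
      _ = b₂ - a₁ := by rw [hX]; abel
  have hy : (1 - t) • (b₁ - a₁) + s • (b₂ - a₂) = b₁ - a₂ := by
    rw [sub_smul, one_smul]
    calc _ = (a₂ + s • (b₂ - a₂)) - t • (b₁ - a₁) + (b₁ - a₁) - a₂ := by abel
      _ = b₁ - a₂ := by rw [← hX]; abel
  have h := mul_cross_sq_le ht₀ (sub_pos.2 hs₁) (b₁ - a₁) (b₂ - a₂)
  rw [hx] at h
  refine h.trans (mul_le_mul_of_nonneg_left ?_ (by positivity))
  -- the triangle through `a₂`, `b₁` and the crossing point only needs a nonnegative defect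
  have h₂ := norm_add_le ((1 - t) • (b₁ - a₁)) (s • (b₂ - a₂))
  rw [hy, norm_smul_of_nonneg (sub_pos.2 ht₁).le, norm_smul_of_nonneg hs₀.le] at h₂
  rw [norm_sub_rev a₁ b₁, norm_sub_rev a₂ b₂, norm_sub_rev a₁ b₂, norm_sub_rev a₂ b₁]
  linarith

theorem one_le_of_mul_mul_le {P Q D c : ℝ} (hP : 1 ≤ P) (hQ : 1 ≤ Q) (hD : 2 ≤ D)
    (h : P * Q * D ≤ (P + Q) * c) : 1 ≤ c := by
  have hPQ : P + Q ≤ P * Q * D := by nlinarith [mul_nonneg (sub_nonneg.2 hP) (sub_nonneg.2 hQ)]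
  nlinarith

theorem one_le_mul_abs_of_mul_eq_intCast {t x : ℝ} {z : ℤ} (ht : 0 < t) (hx : x ≠ 0)
    (h : t * x = z) : 1 ≤ t * |x| := by
  rw [← abs_of_pos ht, ← abs_mul, h]
  exact_mod_cast Int.one_le_abs (by rintro rfl; exact mul_ne_zero ht.ne' hx (by simpa using h))

theorem OnGrid.one_le_mul_abs_cross {N : ℕ} {a₁ b₁ a₂ b₂ : EuclideanSpace ℝ (Fin 2)} {t s : ℝ}
    (ha₁ : OnGrid N a₁) (hb₁ : OnGrid N b₁) (ha₂ : OnGrid N a₂) (hb₂ : OnGrid N b₂)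
    (hncol : ¬Collinear ℝ {a₁, b₁, a₂}) (ht₀ : 0 < t) (hs₀ : 0 < s) (hs₁ : s < 1)
    (hX : a₁ + t • (b₁ - a₁) = a₂ + s • (b₂ - a₂)) :
    1 ≤ t * |cross (b₁ - a₁) (b₂ - a₂)| ∧ 1 ≤ (1 - s) * |cross (b₁ - a₁) (b₂ - a₂)| ∧
      2 ≤ |cross (b₁ - a₁) (b₂ - a₂)| := by
  set Δ := cross (b₁ - a₁) (b₂ - a₂)
  have he : a₂ - a₁ = t • (b₁ - a₁) - s • (b₂ - a₂) := by
    calc a₂ - a₁ = (a₂ + s • (b₂ - a₂)) - a₁ - s • (b₂ - a₂) := by abel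
      _ = _ := by rw [← hX]; abel
  have hct : cross (a₂ - a₁) (b₂ - a₂) = t * Δ := by
    rw [he]; simp only [cross, Δ, PiLp.sub_apply, PiLp.smul_apply, smul_eq_mul]; ring
  have hcs : cross (a₂ - a₁) (b₁ - a₁) = s * Δ := by
    rw [he]; simp only [cross, Δ, PiLp.sub_apply, PiLp.smul_apply, smul_eq_mul]; ring
  have hΔ : Δ ≠ 0 := fun h0 => hncol <| collinear_of_cross_eq_zero <| by
    rw [cross_swap, hcs, h0, mul_zero, neg_zero]
  obtain ⟨zΔ, hzΔ⟩ := exists_cross_eq_intCast hb₁ ha₁ hb₂ ha₂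
  obtain ⟨zt, hzt⟩ := exists_cross_eq_intCast ha₂ ha₁ hb₂ ha₂
  obtain ⟨zs, hzs⟩ := exists_cross_eq_intCast ha₂ ha₁ hb₁ ha₁
  have hS := one_le_mul_abs_of_mul_eq_intCast hs₀ hΔ (hcs.symm.trans hzs)
  have hQ := one_le_mul_abs_of_mul_eq_intCast (sub_pos.2 hs₁) hΔ (z := zΔ - zs) (by
    push_cast; rw [← hzΔ, ← hzs, hcs]; ring)
  exact ⟨one_le_mul_abs_of_mul_eq_intCast ht₀ hΔ (hct.symm.trans hzt), hQ, by linarith⟩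

theorem OnGrid.one_le_mul_norm_sub_of_crossing {N : ℕ}
    {a₁ b₁ a₂ b₂ X : EuclideanSpace ℝ (Fin 2)}
    (ha₁ : OnGrid N a₁) (hb₁ : OnGrid N b₁) (ha₂ : OnGrid N a₂) (hb₂ : OnGrid N b₂)
    (hncol : ¬Collinear ℝ {a₁, b₁, a₂})
    (hX₁ : X ∈ openSegment ℝ a₁ b₁) (hX₂ : X ∈ openSegment ℝ a₂ b₂) :
    1 ≤ 8 * N ^ 3 * (‖a₁ - b₁‖ + ‖a₂ - b₂‖ - (‖a₁ - b₂‖ + ‖a₂ - b₁‖)) := by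
  rw [openSegment_eq_image'] at hX₁ hX₂
  obtain ⟨t, ⟨ht₀, ht₁⟩, rfl⟩ := hX₁
  obtain ⟨s, ⟨hs₀, hs₁⟩, hX⟩ := hX₂
  replace hX : a₁ + t • (b₁ - a₁) = a₂ + s • (b₂ - a₂) := hX.symm
  have key := mul_cross_sq_le_of_segments_cross ht₀ ht₁ hs₀ hs₁ hX
  obtain ⟨hP, hQ, hD⟩ := one_le_mul_abs_cross ha₁ hb₁ ha₂ hb₂ hncol ht₀ hs₀ hs₁ hX
  set Δ := cross (b₁ - a₁) (b₂ - a₂)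
  set D := |Δ|
  set G := ‖a₁ - b₁‖ + ‖a₂ - b₂‖ - (‖a₁ - b₂‖ + ‖a₂ - b₁‖)
  have hr₁ : ‖b₁ - a₁‖ ^ 2 ≤ 2 * N ^ 2 := hb₁.norm_sub_sq_le ha₁
  have hr₂ : ‖b₂ - a₂‖ ^ 2 ≤ 2 * N ^ 2 := hb₂.norm_sub_sq_le ha₂
  have hr₁r₂ : ‖b₁ - a₁‖ * ‖b₂ - a₂‖ ≤ 2 * N ^ 2 := by
    nlinarith [norm_nonneg (b₁ - a₁), norm_nonneg (b₂ - a₂)]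
  have hr₁N : ‖b₁ - a₁‖ ≤ 2 * N := by nlinarith [norm_nonneg (b₁ - a₁)]
  have hr₂N : ‖b₂ - a₂‖ ≤ 2 * N := by nlinarith [norm_nonneg (b₂ - a₂)]
  have hΔ : Δ ≠ 0 := abs_pos.1 (by linarith)
  have hG : 0 ≤ G := (pos_of_mul_pos_right ((by positivity : 0 < t * (1 - s) * Δ ^ 2).trans_le key)
    (by positivity)).le
  refine one_le_of_mul_mul_le hP hQ hD ?_
  calc t * D * ((1 - s) * D) * D = t * (1 - s) * Δ ^ 2 * D := by rw [← sq_abs Δ]; ring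
    _ ≤ 2 * (‖b₁ - a₁‖ * ‖b₂ - a₂‖) * (t * ‖b₁ - a₁‖ + (1 - s) * ‖b₂ - a₂‖) * G * D := by
        gcongr
    _ ≤ 2 * (2 * N ^ 2) * ((t + (1 - s)) * (2 * N)) * G * D := by
        gcongr
        nlinarith
    _ = (t * D + (1 - s) * D) * (8 * N ^ 3 * G) := by ring

theorem floor_add_floor_lt_floor_add_floor {x y z w : ℝ} (h : x + y + 2 ≤ z + w) :
    ⌊x⌋ + ⌊y⌋ < ⌊z⌋ + ⌊w⌋ := by
  have := Int.floor_le x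
  have := Int.floor_le y
  have := Int.lt_floor_add_one z
  have := Int.lt_floor_add_one w
  exact_mod_cast (by linarith : (⌊x⌋ + ⌊y⌋ : ℝ) < ⌊z⌋ + ⌊w⌋)

theorem dl_add_dl_lt_dl_add_dl {N l : ℕ} {a₁ b₁ a₂ b₂ : EuclideanSpace ℝ (Fin 2)}
    (hl : 16 * N ^ 3 ≤ 2 ^ l)
    (hgap : 1 ≤ 8 * N ^ 3 * (‖a₁ - b₁‖ + ‖a₂ - b₂‖ - (‖a₁ - b₂‖ + ‖a₂ - b₁‖))) :
    dl l a₁ b₂ + dl l a₂ b₁ < dl l a₁ b₁ + dl l a₂ b₂ := by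
  set G := ‖a₁ - b₁‖ + ‖a₂ - b₂‖ - (‖a₁ - b₂‖ + ‖a₂ - b₁‖)
  have hG : 0 ≤ G := (pos_of_mul_pos_right (one_pos.trans_le hgap) (by positivity)).le
  have : (16 * N ^ 3 : ℝ) * G ≤ 2 ^ l * G := by gcongr; exact_mod_cast hl
  exact floor_add_floor_lt_floor_add_floor (by linarith)

theorem stmt_12_general (N n l : ℕ)
    (hl : 8 * n * N ^ 4 ≤ 2 ^ l)
    (A B : Finset (EuclideanSpace ℝ (Fin 2)))
    (hAB : Disjoint A B) (hcardA : A.card = n)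
    (hgrid : ∀ p ∈ A ∪ B, OnGrid N p)
    (hcol : ∀ P ∈ A ∪ B, ∀ Q ∈ A ∪ B, ∀ R ∈ A ∪ B, P ≠ Q → P ≠ R → Q ≠ R →
      ¬ Collinear ℝ ({P, Q, R} : Set (EuclideanSpace ℝ (Fin 2))))
    (M₁ M₂ : {x // x ∈ A} → {y // y ∈ B})
    (hM₁ : Function.Bijective M₁) (hM₂ : Function.Bijective M₂)
    (hmin₁ : ∀ M : {x // x ∈ A} → {y // y ∈ B}, Function.Bijective M →
      dlWeight l A B M₁ ≤ dlWeight l A B M)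
    (hmin₂ : ∀ M : {x // x ∈ A} → {y // y ∈ B}, Function.Bijective M →
      dlWeight l A B M₂ ≤ dlWeight l A B M) :
    ∀ a₁ a₂ : {x // x ∈ A}, a₁ ≠ a₂ → M₁ a₁ ≠ M₂ a₂ →
      Disjoint
        (openSegment ℝ (a₁ : EuclideanSpace ℝ (Fin 2)) (M₁ a₁ : EuclideanSpace ℝ (Fin 2)))
        (openSegment ℝ (a₂ : EuclideanSpace ℝ (Fin 2)) (M₂ a₂ : EuclideanSpace ℝ (Fin 2))) := by
  intro a₁ a₂ hne _
  refine Set.disjoint_left.2 fun X hX₁ hX₂ => ?_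
  have hA (a : {x // x ∈ A}) : (a : EuclideanSpace ℝ (Fin 2)) ∈ A ∪ B := Finset.mem_union_left _ a.2
  have hB (b : {y // y ∈ B}) : (b : EuclideanSpace ℝ (Fin 2)) ∈ A ∪ B := Finset.mem_union_right _ b.2
  have hAB' (a : {x // x ∈ A}) (b : {y // y ∈ B}) : (a : EuclideanSpace ℝ (Fin 2)) ≠ b :=
    fun h => Finset.disjoint_left.1 hAB a.2 (h ▸ b.2)
  have hne' : (a₁ : EuclideanSpace ℝ (Fin 2)) ≠ a₂ := Subtype.coe_injective.ne hne
  have hgap := OnGrid.one_le_mul_norm_sub_of_crossing (hgrid _ (hA a₁))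
    (hgrid _ (hB (M₁ a₁))) (hgrid _ (hA a₂)) (hgrid _ (hB (M₂ a₂)))
    (hcol _ (hA a₁) _ (hB _) _ (hA a₂) (hAB' _ _) hne' (hAB' _ _).symm) hX₁ hX₂
  have hN : 1 ≤ N := Nat.one_le_iff_ne_zero.2 (by rintro rfl; norm_num at hgap)
  have hn : 2 ≤ n := hcardA ▸ Finset.one_lt_card.2 ⟨_, a₁.2, _, a₂.2, hne'⟩
  have h16 : 16 * N ^ 3 ≤ 2 ^ l :=
    calc 16 * N ^ 3 = 8 * 2 * N ^ 3 := by ring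
      _ ≤ 8 * n * N ^ 4 :=
        Nat.mul_le_mul (Nat.mul_le_mul_left 8 hn) (Nat.pow_le_pow_right hN (by norm_num))
      _ ≤ 2 ^ l := hl
  have hswap := IsMinWeightMatching.add_le_add_swap
    (W := fun (a : {x // x ∈ A}) (b : {y // y ∈ B}) => dl l a b) ⟨hM₁, hmin₁⟩ ⟨hM₂, hmin₂⟩ hne
  exact lt_irrefl _ ((dl_add_dl_lt_dl_add_dl h16 hgap).trans_le hswap)

/-- For disjoint `n`-point sets `A, B` on the grid `{0,…,N}²` with no three points of
`A ∪ B` collinear, and `2^ℓ ≥ 8nN⁴`: if `M₁` and `M₂` both minimize the `d_ℓ`-weight over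
all perfect matchings, then no edge of `M₁` crosses an edge of `M₂`; hence the union of all
`d_ℓ`-minimum weight perfect matchings forms a planar graph. -/
theorem stmt_12 (N n l : ℕ) (hN : 0 < N) (hn : 0 < n)
    (hl : 8 * n * N ^ 4 ≤ 2 ^ l)
    (A B : Finset (EuclideanSpace ℝ (Fin 2)))
    (hAB : Disjoint A B) (hcardA : A.card = n) (hcardB : B.card = n)
    (hgrid : ∀ p ∈ A ∪ B, OnGrid N p)
    (hcol : ∀ P ∈ A ∪ B, ∀ Q ∈ A ∪ B, ∀ R ∈ A ∪ B, P ≠ Q → P ≠ R → Q ≠ R →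
      ¬ Collinear ℝ ({P, Q, R} : Set (EuclideanSpace ℝ (Fin 2))))
    (M₁ M₂ : {x // x ∈ A} → {y // y ∈ B})
    (hM₁ : Function.Bijective M₁) (hM₂ : Function.Bijective M₂)
    (hmin₁ : ∀ M : {x // x ∈ A} → {y // y ∈ B}, Function.Bijective M →
      dlWeight l A B M₁ ≤ dlWeight l A B M)
    (hmin₂ : ∀ M : {x // x ∈ A} → {y // y ∈ B}, Function.Bijective M →
      dlWeight l A B M₂ ≤ dlWeight l A B M) :
    ∀ a₁ a₂ : {x // x ∈ A}, a₁ ≠ a₂ → M₁ a₁ ≠ M₂ a₂ →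
      Disjoint
        (openSegment ℝ (a₁ : EuclideanSpace ℝ (Fin 2)) (M₁ a₁ : EuclideanSpace ℝ (Fin 2)))
        (openSegment ℝ (a₂ : EuclideanSpace ℝ (Fin 2)) (M₂ a₂ : EuclideanSpace ℝ (Fin 2))) :=
  stmt_12_general N n l hl A B hAB hcardA hgrid hcol M₁ M₂ hM₁ hM₂ hmin₁ hmin₂
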